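/- L^p comparison of C and A: Let 0 < q < p < ∞ and α > 0, and suppose the uncentred Hardy–Littlewood maximal operator M is of strong type (p/q, p/q), i.e. there is C₀ such that ‖M(g)‖_{L^{p/q}(X)} ≤ C₀ ‖g‖_{L^{p/q}(X)} for all measurable g. Then for all measurable functions f on X⁺, ‖C_q^α(f)‖_{L^p(X)} ≤ C₀^{1/q} ‖A_q^α(f)‖_{L^p(X)}. -/

import Mathlib

open MeasureTheory Metric Set
open scoped ENNReal NNReal

noncomputable section

variable {X : Type*}

/-- The measure `dμ(y) dt/t` on `X⁺ = X × (0,∞)`, modelled on `X × ℝ`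
(supported on `{t > 0}`). -/
def upHalf [MeasurableSpace X] (μ : Measure X) : Measure (X × ℝ) :=
  μ.prod ((volume.restrict (Set.Ioi (0:ℝ))).withDensity fun t => ENNReal.ofReal t⁻¹)

/-- The measure `dμ(y) dt` on `X⁺` (supported on `{t > 0}`). -/
def upHalf' [MeasurableSpace X] (μ : Measure X) : Measure (X × ℝ) :=
  μ.prod (volume.restrict (Set.Ioi (0:ℝ)))

/-- Cone of aperture `α` with vertex `x`. -/
def coneAt [PseudoMetricSpace X] (α : ℝ) (x : X) : Set (X × ℝ) :=
  {p | dist p.1 x < α * p.2}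

/-- Tent of aperture `α` over `O ⊆ X`: the complement in `X⁺` of the union of the
cones of aperture `α` with vertices outside `O`. -/
def tentOver [PseudoMetricSpace X] (α : ℝ) (O : Set X) : Set (X × ℝ) :=
  {p | 0 < p.2 ∧ ∀ x ∉ O, α * p.2 ≤ dist p.1 x}

/-- The `α`-shadow of `C ⊆ X⁺`: points whose cone meets `C`. -/
def shadowOf [PseudoMetricSpace X] (α : ℝ) (C : Set (X × ℝ)) : Set X :=
  {x | ∃ p ∈ C, p ∈ coneAt α x}

/-- The operator `A_q^α`:
`A_q^α(f)(x) = (∬_{Γ^α(x)} |f(y,t)|^q dμ(y)/V(y,αt) dt/t)^{1/q}`. -/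
def Afun [PseudoMetricSpace X] [MeasurableSpace X] (μ : Measure X) (q α : ℝ)
    (f : X × ℝ → ℝ) (x : X) : ℝ≥0∞ :=
  (∫⁻ p in coneAt α x,
      ENNReal.ofReal (|f p| ^ q) / μ (ball p.1 (α * p.2)) ∂upHalf μ) ^ (1/q)

/-- The truncated operator `A_q^α(·|h)`, integrating over the truncated cone
`Γ_h^α(x)`. -/
def AfunT [PseudoMetricSpace X] [MeasurableSpace X] (μ : Measure X) (q α h : ℝ)
    (f : X × ℝ → ℝ) (x : X) : ℝ≥0∞ :=
  (∫⁻ p in coneAt α x ∩ {p : X × ℝ | p.2 < h},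
      ENNReal.ofReal (|f p| ^ q) / μ (ball p.1 (α * p.2)) ∂upHalf μ) ^ (1/q)

/-- The Carleson operator `C_q^α`:
`C_q^α(f)(x) = sup_{B ∋ x} (μ(B)⁻¹ ∬_{T^α(B)} |f(y,t)|^q dμ(y) dt/t)^{1/q}`,
the supremum being over open balls containing `x`. -/
def Cfun [PseudoMetricSpace X] [MeasurableSpace X] (μ : Measure X) (q α : ℝ)
    (f : X × ℝ → ℝ) (x : X) : ℝ≥0∞ :=
  ⨆ (z : X) (ρ : ℝ) (_ : 0 < ρ ∧ x ∈ ball z ρ),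
    ((μ (ball z ρ))⁻¹ *
      ∫⁻ p in tentOver α (ball z ρ), ENNReal.ofReal (|f p| ^ q) ∂upHalf μ) ^ (1/q)

/-- The tent space quasi-norm `‖f‖_{T^{p,q,α}} = ‖A_q^α(f)‖_{L^p(X)}`. -/
def tNorm [PseudoMetricSpace X] [MeasurableSpace X] (μ : Measure X) (p q α : ℝ)
    (f : X × ℝ → ℝ) : ℝ≥0∞ :=
  (∫⁻ x, Afun μ q α f x ^ p ∂μ) ^ (1/p)

/-- The uncentred Hardy–Littlewood maximal operator applied to an
`ℝ≥0∞`-valued function. -/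
def maxFun [PseudoMetricSpace X] [MeasurableSpace X] (μ : Measure X)
    (g : X → ℝ≥0∞) (x : X) : ℝ≥0∞ :=
  ⨆ (z : X) (ρ : ℝ) (_ : 0 < ρ ∧ x ∈ ball z ρ),
    (μ (ball z ρ))⁻¹ * ∫⁻ y in ball z ρ, g y ∂μ

/-- `μ` is doubling: `V(x,2r) ≤ C V(x,r)` for all `x`, `r > 0`. -/
def DoublingMeas [PseudoMetricSpace X] [MeasurableSpace X] (μ : Measure X) : Prop :=
  ∃ C > (0:ℝ), ∀ (x : X) (r : ℝ), 0 < r →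
    μ (ball x (2 * r)) ≤ ENNReal.ofReal C * μ (ball x r)

/-!
If `(y,t)` lies in the tent over a ball `B`, then `B(y,αt) ⊆ B`, so by Tonelli
`∬_{T^α(B)} |f|^q dμ dt/t ≤ ∫_B A_q^α(f)^q dμ`. Hence `C_q^α(f)^q ≤ M(A_q^α(f)^q)` pointwise,
and the strong `(p/q, p/q)` bound for `M`, applied to `A_q^α(f)^q`, gives the claim.
Tonelli needs the cone condition to be measurable on `X × X⁺`, i.e. `X` separable; this
follows from σ-finiteness, since a maximal `ε`-separated set indexes disjoint balls of positive
measure and is therefore countable.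
-/

open TopologicalSpace

lemma Metric.IsSeparated.countable_of_measure_ball_pos [PseudoMetricSpace X]
    [MeasurableSpace X] [OpensMeasurableSpace X] (μ : Measure X) [SigmaFinite μ]
    (hpos : ∀ (x : X) (r : ℝ), 0 < r → 0 < μ (ball x r)) {ε : ℝ≥0} (hε : 0 < ε)
    {N : Set X} (hN : IsSeparated ε N) : N.Countable := by
  have hdisj : Pairwise (Function.onFun Disjoint fun a : N => ball (a : X) (ε / 2)) := by
    intro a b hab
    refine ball_disjoint_ball ?_
    have hab' : (ε : ℝ≥0∞) < edist (a : X) b := hN a.2 b.2 (Subtype.coe_ne_coe.mpr hab)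
    rw [edist_nndist, ENNReal.coe_lt_coe, ← NNReal.coe_lt_coe, coe_nndist] at hab'
    linarith
  have hcount := Measure.countable_meas_pos_of_disjoint_iUnion (μ := μ)
    (fun _ => measurableSet_ball) hdisj
  simp only [hpos _ _ (half_pos (NNReal.coe_pos.mpr hε)), ofPred_true] at hcount
  exact countable_coe_iff.mp (countable_univ_iff.mp hcount)

lemma secondCountableTopology_of_measure_ball_pos [PseudoMetricSpace X] [MeasurableSpace X]
    [OpensMeasurableSpace X] (μ : Measure X) [SigmaFinite μ]
    (hpos : ∀ (x : X) (r : ℝ), 0 < r → 0 < μ (ball x r)) : SecondCountableTopology X := by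
  refine secondCountable_of_almost_dense_set fun ε hε => ?_
  obtain ⟨N, hN⟩ := zorn_subset {N : Set X | IsSeparated ε.toNNReal N}
    fun c hc hchain => ⟨⋃₀ c, hchain.pairwise_sUnion.2 hc, fun _ => subset_sUnion_of_mem⟩
  have hcover : IsCover ε.toNNReal univ N :=
    IsCover.of_maximal_isSeparated (by simpa using hN)
  refine ⟨N, hN.1.countable_of_measure_ball_pos μ hpos (by simpa using hε), fun x => ?_⟩
  obtain ⟨y, hy, hxy⟩ := hcover (mem_univ x)
  exact ⟨y, hy, (edist_le_ofReal hε.le).mp hxy⟩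

lemma ball_subset_of_mem_tentOver [PseudoMetricSpace X] {α : ℝ} {O : Set X} {p : X × ℝ}
    (hp : p ∈ tentOver α O) : ball p.1 (α * p.2) ⊆ O := fun z hz => by
  by_contra hzO
  have := hp.2 z hzO
  rw [mem_ball'] at hz
  linarith

def coneIntegrand [PseudoMetricSpace X] [MeasurableSpace X] (μ : Measure X) (q α : ℝ)
    (f : X × ℝ → ℝ) (p : X × ℝ) : ℝ≥0∞ :=
  ENNReal.ofReal (|f p| ^ q) / μ (ball p.1 (α * p.2))

lemma Afun_rpow [PseudoMetricSpace X] [MeasurableSpace X] (μ : Measure X) {q : ℝ} (hq : q ≠ 0)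
    (α : ℝ) (f : X × ℝ → ℝ) (x : X) :
    Afun μ q α f x ^ q = ∫⁻ p in coneAt α x, coneIntegrand μ q α f p ∂upHalf μ := by
  rw [Afun, ← ENNReal.rpow_mul, one_div, inv_mul_cancel₀ hq, ENNReal.rpow_one]
  rfl

instance [MeasurableSpace X] (μ : Measure X) [SFinite μ] : SFinite (upHalf μ) := by
  unfold upHalf; infer_instance

section Measurability

variable [PseudoMetricSpace X] [MeasurableSpace X] [OpensMeasurableSpace X]

lemma measurableSet_coneAt (α : ℝ) (x : X) : MeasurableSet (coneAt α x) :=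
  (isOpen_lt (by fun_prop) (by fun_prop)).measurableSet

lemma measurableSet_tentOver (α : ℝ) (O : Set X) : MeasurableSet (tentOver α O) := by
  have hT : tentOver α O
      = {p : X × ℝ | 0 < p.2} ∩ ⋂ x ∈ Oᶜ, {p : X × ℝ | α * p.2 ≤ dist p.1 x} := by
    ext p; simp [tentOver]
  rw [hT]
  exact (isOpen_lt continuous_const continuous_snd).measurableSet.inter
    (isClosed_biInter fun x _ => isClosed_le (by fun_prop) (by fun_prop)).measurableSet

variable [SecondCountableTopology X]

lemma measurableSet_setOf_mem_coneAt (α : ℝ) :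
    MeasurableSet {w : X × (X × ℝ) | w.2 ∈ coneAt α w.1} :=
  (isOpen_lt (f := fun w : X × (X × ℝ) => dist w.2.1 w.1) (g := fun w => α * w.2.2)
    (by fun_prop) (by fun_prop)).measurableSet

lemma measurable_measure_ball_prod (μ : Measure X) [SFinite μ] :
    Measurable fun p : X × ℝ => μ (ball p.1 p.2) :=
  measurable_measure_prodMk_left (s := {w : (X × ℝ) × X | dist w.2 w.1.1 < w.1.2})
    (isOpen_lt (by fun_prop) (by fun_prop)).measurableSet

lemma measurable_coneIntegrand (μ : Measure X) [SFinite μ] (q α : ℝ) {f : X × ℝ → ℝ}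
    (hf : Measurable f) : Measurable (coneIntegrand μ q α f) :=
  (hf.abs.pow_const q).ennreal_ofReal.div <| (measurable_measure_ball_prod μ).comp <|
    measurable_fst.prodMk (measurable_const.mul measurable_snd)

lemma measurable_Afun (μ : Measure X) [SFinite μ] (q α : ℝ) {f : X × ℝ → ℝ}
    (hf : Measurable f) : Measurable (Afun μ q α f) := by
  have hcone : Measurable fun w : X × (X × ℝ) =>
      {w : X × (X × ℝ) | w.2 ∈ coneAt α w.1}.indicator (coneIntegrand μ q α f ∘ Prod.snd) w :=
    ((measurable_coneIntegrand μ q α hf).comp measurable_snd).indicator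
      (measurableSet_setOf_mem_coneAt α)
  have hA : Afun μ q α f = fun x => (∫⁻ p,
      {w : X × (X × ℝ) | w.2 ∈ coneAt α w.1}.indicator (coneIntegrand μ q α f ∘ Prod.snd) (x, p)
        ∂upHalf μ) ^ (1 / q) := by
    funext x
    rw [Afun, ← lintegral_indicator (measurableSet_coneAt α x)]
    rfl
  rw [hA]
  exact hcone.lintegral_prod_right'.pow_const _

end Measurability

section TentEstimate

variable [PseudoMetricSpace X] [MeasurableSpace X] [OpensMeasurableSpace X]
  [SecondCountableTopology X] (μ : Measure X) [SFinite μ] {q α : ℝ} {f : X × ℝ → ℝ}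

lemma setLIntegral_Afun_rpow (hq : q ≠ 0) (hf : Measurable f) (O : Set X) :
    ∫⁻ x in O, Afun μ q α f x ^ q ∂μ
      = ∫⁻ p, coneIntegrand μ q α f p * μ (ball p.1 (α * p.2) ∩ O) ∂upHalf μ := by
  simp_rw [Afun_rpow μ hq, ← lintegral_indicator (measurableSet_coneAt α _)]
  have hmeas : Measurable (Function.uncurry fun x p => (coneAt α x).indicator
      (coneIntegrand μ q α f) p) :=
    ((measurable_coneIntegrand μ q α hf).comp measurable_snd).indicator
      (measurableSet_setOf_mem_coneAt α)
  rw [lintegral_lintegral_swap hmeas.aemeasurable]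
  refine lintegral_congr fun p => ?_
  have hcone : ∀ x, (coneAt α x).indicator (coneIntegrand μ q α f) p
      = (ball p.1 (α * p.2)).indicator (fun _ => coneIntegrand μ q α f p) x := fun x => by
    simp only [indicator, coneAt, mem_ofPred_eq, mem_ball']
    congr
  simp only [hcone]
  rw [lintegral_indicator measurableSet_ball, setLIntegral_const,
    Measure.restrict_apply measurableSet_ball]

lemma lintegral_tentOver_le (hpos : ∀ (x : X) (r : ℝ), 0 < r → 0 < μ (ball x r))
    (hfin : ∀ (x : X) (r : ℝ), 0 < r → μ (ball x r) < ∞) (hα : 0 < α) (hq : q ≠ 0)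
    (hf : Measurable f) (O : Set X) :
    ∫⁻ p in tentOver α O, ENNReal.ofReal (|f p| ^ q) ∂upHalf μ
      ≤ ∫⁻ x in O, Afun μ q α f x ^ q ∂μ := calc
  _ ≤ ∫⁻ p in tentOver α O, coneIntegrand μ q α f p * μ (ball p.1 (α * p.2) ∩ O) ∂upHalf μ := by
    refine setLIntegral_mono' (measurableSet_tentOver α O) fun p hp => ?_
    have hr : 0 < α * p.2 := mul_pos hα hp.1
    rw [inter_eq_left.mpr (ball_subset_of_mem_tentOver hp), coneIntegrand,
      ENNReal.div_mul_cancel (hpos _ _ hr).ne' (hfin _ _ hr).ne]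
  _ ≤ ∫⁻ p, coneIntegrand μ q α f p * μ (ball p.1 (α * p.2) ∩ O) ∂upHalf μ :=
    setLIntegral_le_lintegral _ _
  _ = _ := (setLIntegral_Afun_rpow μ hq hf O).symm

lemma Cfun_le_maxFun_Afun_rpow (hpos : ∀ (x : X) (r : ℝ), 0 < r → 0 < μ (ball x r))
    (hfin : ∀ (x : X) (r : ℝ), 0 < r → μ (ball x r) < ∞) (hα : 0 < α) (hq : 0 < q)
    (hf : Measurable f) (x : X) :
    Cfun μ q α f x ≤ maxFun μ (fun y => Afun μ q α f y ^ q) x ^ (1 / q) := by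
  refine iSup₂_le fun z ρ => iSup_le fun hx => ?_
  gcongr
  calc _ ≤ (μ (ball z ρ))⁻¹ * ∫⁻ y in ball z ρ, Afun μ q α f y ^ q ∂μ := by
        gcongr; exact lintegral_tentOver_le μ hpos hfin hα hq.ne' hf _
    _ ≤ _ := le_iSup₂_of_le z ρ (le_iSup_of_le hx (by exact le_rfl))

end TentEstimate

section MaximalFunction

variable [PseudoMetricSpace X] [MeasurableSpace X] {μ : Measure X}

lemma maxFun_congr_ae {g h : X → ℝ≥0∞} (hgh : g =ᵐ[μ] h) : maxFun μ g = maxFun μ h := by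
  funext x
  refine iSup_congr fun z => iSup_congr fun ρ => iSup_congr fun _ => ?_
  rw [lintegral_congr_ae (ae_restrict_of_ae hgh)]

lemma one_le_maxFun_one (hpos : ∀ (x : X) (r : ℝ), 0 < r → 0 < μ (ball x r))
    (hfin : ∀ (x : X) (r : ℝ), 0 < r → μ (ball x r) < ∞) (x : X) :
    1 ≤ maxFun μ (fun _ => 1) x := calc
  (1 : ℝ≥0∞) = (μ (ball x 1))⁻¹ * ∫⁻ _ in ball x 1, 1 ∂μ := by
    rw [setLIntegral_one, ENNReal.inv_mul_cancel (hpos x 1 one_pos).ne' (hfin x 1 one_pos).ne]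
  _ ≤ maxFun μ (fun _ => 1) x :=
    le_iSup₂_of_le x 1 (le_iSup_of_le ⟨one_pos, mem_ball_self one_pos⟩ (by exact le_rfl))

def MaxFunStrongType (μ : Measure X) (r C : ℝ) : Prop :=
  ∀ g : X → ℝ, Measurable g →
    (∫⁻ x, maxFun μ (fun y => ENNReal.ofReal |g y|) x ^ r ∂μ) ^ r⁻¹
      ≤ ENNReal.ofReal C * (∫⁻ x, ENNReal.ofReal |g x| ^ r ∂μ) ^ r⁻¹

variable {r C : ℝ}

lemma MaxFunStrongType.ofReal_ne_zero [Nonempty X] (hM : MaxFunStrongType μ r C)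
    (hpos : ∀ (x : X) (r : ℝ), 0 < r → 0 < μ (ball x r))
    (hfin : ∀ (x : X) (r : ℝ), 0 < r → μ (ball x r) < ∞) (hr : 0 < r) :
    ENNReal.ofReal C ≠ 0 := by
  intro hC
  obtain ⟨x₀⟩ := ‹Nonempty X›
  have hM1 := hM (fun _ => 1) measurable_const
  simp only [abs_one, ENNReal.ofReal_one, hC, zero_mul, nonpos_iff_eq_zero,
    ENNReal.rpow_eq_zero_iff, inv_pos, hr, inv_neg'', hr.not_gt, and_true, and_false,
    or_false] at hM1
  have hlower : μ (ball x₀ 1) ≤ ∫⁻ x, maxFun μ (fun _ => 1) x ^ r ∂μ := calc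
    μ (ball x₀ 1) ≤ ∫⁻ _, 1 ∂μ := by rw [lintegral_one]; exact measure_mono (subset_univ _)
    _ ≤ _ := lintegral_mono fun x => ENNReal.one_le_rpow (one_le_maxFun_one hpos hfin x) hr
  exact (hpos x₀ 1 one_pos).ne' (le_zero_iff.mp (hM1 ▸ hlower))

lemma MaxFunStrongType.lintegral_rpow_le (hM : MaxFunStrongType μ r C)
    (hpos : ∀ (x : X) (r : ℝ), 0 < r → 0 < μ (ball x r))
    (hfin : ∀ (x : X) (r : ℝ), 0 < r → μ (ball x r) < ∞) (hr : 0 < r)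
    {g : X → ℝ≥0∞} (hg : Measurable g) :
    (∫⁻ x, maxFun μ g x ^ r ∂μ) ^ r⁻¹ ≤ ENNReal.ofReal C * (∫⁻ x, g x ^ r ∂μ) ^ r⁻¹ := by
  rcases eq_or_ne (∫⁻ x, g x ^ r ∂μ) ∞ with hinf | hfin'
  · have : Nonempty X := by
      by_contra hX
      rw [not_nonempty_iff] at hX
      simp [μ.eq_zero_of_isEmpty] at hinf
    rw [hinf, ENNReal.top_rpow_of_pos (inv_pos.2 hr),
      ENNReal.mul_top (hM.ofReal_ne_zero hpos hfin hr)]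
    exact le_top
  · have hg_fin : ∀ᵐ x ∂μ, g x ≠ ∞ := by
      filter_upwards [ae_lt_top (hg.pow_const r) hfin'] with x hx
      exact ((ENNReal.rpow_lt_top_iff_of_pos hr).mp hx).ne
    have hreal : (fun x => ENNReal.ofReal |(g x).toReal|) =ᵐ[μ] g := by
      filter_upwards [hg_fin] with x hx
      rw [abs_of_nonneg ENNReal.toReal_nonneg, ENNReal.ofReal_toReal hx]
    have hM' := hM (fun x => (g x).toReal) hg.ennreal_toReal
    have hint : ∫⁻ x, ENNReal.ofReal |(g x).toReal| ^ r ∂μ = ∫⁻ x, g x ^ r ∂μ :=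
      lintegral_congr_ae (hreal.fun_comp (· ^ r))
    rwa [maxFun_congr_ae hreal, hint] at hM'

end MaximalFunction

/-- **`L^p` comparison of `C` and `A`.** Let `0 < q < p < ∞`, `α > 0`, and
suppose the uncentred Hardy–Littlewood maximal operator is of strong type
`(p/q, p/q)` with constant `C₀`. Then
`‖C_q^α(f)‖_{L^p(X)} ≤ C₀^{1/q} ‖A_q^α(f)‖_{L^p(X)}` for all measurable `f`. -/
theorem carleson_Lp_bound [MetricSpace X] [MeasurableSpace X] [BorelSpace X]
    (μ : Measure X) [SigmaFinite μ]
    (hpos : ∀ (x : X) (r : ℝ), 0 < r → 0 < μ (ball x r))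
    (hfin : ∀ (x : X) (r : ℝ), 0 < r → μ (ball x r) < ∞)
    (p q α : ℝ) (hq : 0 < q) (hqp : q < p) (hα : 0 < α) (C₀ : ℝ)
    (hmax : ∀ g : X → ℝ, Measurable g →
      (∫⁻ x, maxFun μ (fun y => ENNReal.ofReal |g y|) x ^ (p/q) ∂μ) ^ (q/p)
        ≤ ENNReal.ofReal C₀ * (∫⁻ x, ENNReal.ofReal |g x| ^ (p/q) ∂μ) ^ (q/p))
    (f : X × ℝ → ℝ) (hf : Measurable f) :
    (∫⁻ x, Cfun μ q α f x ^ p ∂μ) ^ (1/p)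
      ≤ ENNReal.ofReal C₀ ^ (1/q) * (∫⁻ x, Afun μ q α f x ^ p ∂μ) ^ (1/p) := by
  have hp : 0 < p := hq.trans hqp
  have := secondCountableTopology_of_measure_ball_pos μ hpos
  have hM : MaxFunStrongType μ (p / q) C₀ := fun g hg => by
    simpa only [inv_div] using hmax g hg
  set Aq := fun y => Afun μ q α f y ^ q
  have hC : ∀ x, Cfun μ q α f x ^ p ≤ maxFun μ Aq x ^ (p / q) := fun x => calc
    _ ≤ (maxFun μ Aq x ^ (1 / q)) ^ p := by
      gcongr; exact Cfun_le_maxFun_Afun_rpow μ hpos hfin hα hq hf x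
    _ = _ := by rw [← ENNReal.rpow_mul, one_div_mul_eq_div]
  have hexp : ∀ a : ℝ≥0∞, (a ^ (p / q)⁻¹) ^ (1 / q) = a ^ (1 / p) := fun a => by
    rw [← ENNReal.rpow_mul]; congr 1; field_simp
  calc (∫⁻ x, Cfun μ q α f x ^ p ∂μ) ^ (1 / p)
      = ((∫⁻ x, Cfun μ q α f x ^ p ∂μ) ^ (p / q)⁻¹) ^ (1 / q) := (hexp _).symm
    _ ≤ ((∫⁻ x, maxFun μ Aq x ^ (p / q) ∂μ) ^ (p / q)⁻¹) ^ (1 / q) := by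
      gcongr with x; exact hC x
    _ ≤ (ENNReal.ofReal C₀ * (∫⁻ x, Aq x ^ (p / q) ∂μ) ^ (p / q)⁻¹) ^ (1 / q) := by
      gcongr
      exact hM.lintegral_rpow_le hpos hfin (div_pos hp hq) ((measurable_Afun μ q α hf).pow_const q)
    _ = ENNReal.ofReal C₀ ^ (1 / q) * (∫⁻ x, Afun μ q α f x ^ p ∂μ) ^ (1 / p) := by
      simp_rw [Aq, ENNReal.mul_rpow_of_nonneg _ _ (one_div_pos.2 hq).le, hexp, ← ENNReal.rpow_mul,
        mul_div_cancel₀ p hq.ne']
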